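/- arXiv:1503.03280 — 2 statements merged into one kernel-verified Lean document; each statement's English description precedes it below -/
import Mathlib

section
/- Let L and L′ be 𝒪_F-lattice chains in V. Then 𝔄(L) = 𝔄(L′) if and only if there exists an integer k ∈ ℤ such that L′(i) = L(i+k) for all i ∈ ℤ. In particular, a hereditary order determines the lattice chain defining it up to translation of the indexing. -/
/-!
Context: `F` is a nonarchimedean local field, modelled as a field together with a
valuation subring `OF` which is a discrete valuation ring with finite residue field,
with a fixed uniformizer `ϖF` (an irreducible element of `OF`).  `V` is a nonzero
finite-dimensional `F`-vector space, `A = End_F V` and `G = GL_F(V) = (End_F V)ˣ`.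
-/

noncomputable section

variable {F : Type*} [Field F] {V : Type*} [AddCommGroup V] [Module F V]

/-- A subring of `F` acts on any `F`-vector space by restriction of scalars. -/
instance (priority := 100) ValuationSubring.instModuleOfModule (O : ValuationSubring F) :
    Module O V :=
  Module.compHom V O.subtype

/-- `L : ℤ → Submodule 𝒪 V` is an `𝒪`-lattice chain of period `e` : each `L i` is a
finitely generated `𝒪`-submodule spanning `V` over `F` (an `𝒪`-lattice), the chain is
strictly decreasing, and `ϖ • L i = L (i + e)` for all `i`. -/
structure IsLatticeChain (O : ValuationSubring F) (ϖ : O) (L : ℤ → Submodule O V) (e : ℕ) :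
    Prop where
  period_pos : 0 < e
  fg : ∀ i, (L i).FG
  spans : ∀ i, Submodule.span F ((L i : Set V)) = ⊤
  strict : ∀ i, L (i + 1) < L i
  smul_eq : ∀ (i : ℤ) (x : V), x ∈ L (i + e) ↔ ∃ y ∈ L i, x = (ϖ : F) • y

/-- The hereditary order `𝔄(L) = {a ∈ End_F V : a (L i) ⊆ L i for all i}`. -/
def hereditaryOrder (O : ValuationSubring F) (L : ℤ → Submodule O V) :
    Subring (Module.End F V) where
  carrier := {a | ∀ i, ∀ x ∈ L i, a x ∈ L i}
  zero_mem' := fun i x _ => by simpa using (L i).zero_mem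
  one_mem' := fun i x hx => by simpa using hx
  add_mem' := fun {a b} ha hb i x hx => by
    simpa using (L i).add_mem (ha i x hx) (hb i x hx)
  neg_mem' := fun {a} ha i x hx => by simpa using (L i).neg_mem (ha i x hx)
  mul_mem' := fun {a b} ha hb i x hx => by
    simpa [Module.End.mul_apply] using ha i _ (hb i x hx)

lemma mem_hereditaryOrder {O : ValuationSubring F} {L : ℤ → Submodule O V}
    {a : Module.End F V} :
    a ∈ hereditaryOrder O L ↔ ∀ i, ∀ x ∈ L i, a x ∈ L i := Iff.rfl

/-- The radical `𝔓(L) = {a ∈ End_F V : a (L i) ⊆ L (i+1) for all i}`, as a set. -/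
def radicalSet (O : ValuationSubring F) (L : ℤ → Submodule O V) :
    Set (Module.End F V) :=
  {a | ∀ i, ∀ x ∈ L i, a x ∈ L (i + 1)}

/-- The unit group `U(𝔄(L)) = 𝔄(L)ˣ` of the hereditary order, as a set of
endomorphisms: the elements of `𝔄(L)` invertible in `𝔄(L)`. -/
def orderUnits (O : ValuationSubring F) (L : ℤ → Submodule O V) :
    Set (Module.End F V) :=
  {a | a ∈ hereditaryOrder O L ∧ ∃ b ∈ hereditaryOrder O L, a * b = 1 ∧ b * a = 1}

/-- The unit group `U(𝔄(L)) = 𝔄(L)ˣ`, as a subgroup of `G = GL_F(V)`. -/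
def unitGroup (O : ValuationSubring F) (L : ℤ → Submodule O V) :
    Subgroup (Module.End F V)ˣ where
  carrier := {u | ↑u ∈ hereditaryOrder O L ∧ ↑u⁻¹ ∈ hereditaryOrder O L}
  one_mem' := ⟨one_mem _, by simpa using one_mem (hereditaryOrder O L)⟩
  mul_mem' := fun {a b} ha hb => ⟨mul_mem ha.1 hb.1, by
    rw [mul_inv_rev]; exact mul_mem hb.2 ha.2⟩
  inv_mem' := fun {a} ha => ⟨ha.2, by simpa using ha.1⟩

lemma mem_unitGroup {O : ValuationSubring F} {L : ℤ → Submodule O V}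
    {u : (Module.End F V)ˣ} :
    u ∈ unitGroup O L ↔
      (u : Module.End F V) ∈ hereditaryOrder O L ∧
        ((u⁻¹ : (Module.End F V)ˣ) : Module.End F V) ∈ hereditaryOrder O L := Iff.rfl

/-- Conjugation `g S g⁻¹` of a set of endomorphisms by an element `g ∈ GL_F(V)`. -/
def conjIm (g : (Module.End F V)ˣ) (S : Set (Module.End F V)) : Set (Module.End F V) :=
  (fun a => (g : Module.End F V) * a * ((g⁻¹ : (Module.End F V)ˣ) : Module.End F V)) '' S

lemma IsLatticeChain.antitone {O : ValuationSubring F} {ϖ : O} {L : ℤ → Submodule O V}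
    {e : ℕ} (hL : IsLatticeChain O ϖ L e) : Antitone L :=
  antitone_int_of_succ_le fun i => (hL.strict i).le

lemma IsLatticeChain.smul_mem_succ {O : ValuationSubring F} {ϖ : O} {L : ℤ → Submodule O V}
    {e : ℕ} (hL : IsLatticeChain O ϖ L e) (i : ℤ) {x : V} (hx : x ∈ L i) :
    (ϖ : F) • x ∈ L (i + 1) := by
  have h1 : (ϖ : F) • x ∈ L (i + e) := (hL.smul_eq i _).2 ⟨x, hx, rfl⟩
  have h2 : (i + 1 : ℤ) ≤ i + e := by have := hL.period_pos; omega
  exact hL.antitone h2 h1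

/-!
An `𝔄(L)`-stable lattice `M` is one of the `L i`. Indeed `M` and `L 0` are commensurable, so
there is a largest `i` with `M ⊆ L i`; pick `x ∈ M \ L (i + 1)`. Since `L i / L (i + 1)` is a
vector space over the residue field and `L i` is free, there is a linear form `φ` with `φ x = 1`,
`φ (L i) ⊆ 𝒪` and `φ (L (i + 1)) ⊆ ϖ𝒪`. By periodicity it suffices to test `z ↦ φ z • y` on
`L i, …, L (i + e - 1)` to see that it lies in `𝔄(L)` for every `y ∈ L i`; hence `L i = 𝔄(L) x ⊆ M`.
If `𝔄(L) = 𝔄(L')`, each `L' i` is therefore some `L (σ i)`, and `σ` is a strictly increasing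
bijection of `ℤ`, i.e. a translation.
-/

open IsLocalRing in
theorem Module.Projective.exists_linearMap_eq_one_of_notMem {R M : Type*} [CommRing R]
    [IsLocalRing R] [AddCommGroup M] [Module R M] [Module.Projective R M] {N : Submodule R M}
    (hN : maximalIdeal R • (⊤ : Submodule R M) ≤ N) {x : M} (hx : x ∉ N) :
    ∃ μ : M →ₗ[R] R, μ x = 1 ∧ ∀ z ∈ N, μ z ∈ maximalIdeal R := by
  have hTor : Module.IsTorsionBySet R (M ⧸ N) (maximalIdeal R) := by
    rintro q ⟨r, hr⟩
    obtain ⟨z, rfl⟩ := N.mkQ_surjective q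
    rw [← map_smul, Submodule.mkQ_apply, Submodule.Quotient.mk_eq_zero]
    exact hN (Submodule.smul_mem_smul hr Submodule.mem_top)
  let _ := Ideal.Quotient.field (maximalIdeal R)
  let _ := hTor.module
  obtain ⟨g, hg⟩ := Module.Projective.exists_dual_eq_one (R ⧸ maximalIdeal R)
    (x := N.mkQ x) (by simpa using hx)
  obtain ⟨μ, hμ⟩ := Module.projective_lifting_property (maximalIdeal R).mkQ
    (g.restrictScalars R ∘ₗ N.mkQ) (maximalIdeal R).mkQ_surjective
  have hμ_apply (z : M) : Ideal.Quotient.mk _ (μ z) = g (N.mkQ z) := LinearMap.congr_fun hμ z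
  have hμx : IsUnit (μ x) := by
    by_contra h
    have h0 := Ideal.Quotient.eq_zero_iff_mem.2 ((mem_maximalIdeal _).2 h)
    rw [hμ_apply, hg] at h0
    exact one_ne_zero h0
  refine ⟨(↑hμx.unit⁻¹ : R) • μ, by simp, fun z hz => Ideal.mul_mem_left _ _ ?_⟩
  rw [← Ideal.Quotient.eq_zero_iff_mem, hμ_apply, Submodule.mkQ_apply,
    (Submodule.Quotient.mk_eq_zero N).2 hz, map_zero]

section Lattice

variable {O : ValuationSubring F}

instance : IsScalarTower O F V :=
  ⟨fun c f v => mul_smul (c : F) f v⟩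

theorem Submodule.smul_mem_of_mem_valuationSubring (M : Submodule O V) {c : F} (hc : c ∈ O)
    {v : V} (hv : v ∈ M) : c • v ∈ M :=
  M.smul_mem ⟨c, hc⟩ hv

theorem ValuationSubring.exists_pow_mul_mem [IsDiscreteValuationRing O] {ϖ : O}
    (hϖ : Irreducible ϖ) (f : F) : ∃ n : ℕ, (ϖ : F) ^ n * f ∈ O := by
  rcases eq_or_ne f 0 with rfl | hf0
  · exact ⟨0, by simp⟩
  rcases O.mem_or_inv_mem f with hf | hf
  · exact ⟨0, by simpa using hf⟩
  obtain ⟨n, u, hu⟩ := IsDiscreteValuationRing.eq_unit_mul_pow_irreducible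
    (x := ⟨f⁻¹, hf⟩) (by simpa [Subtype.ext_iff] using hf0) hϖ
  have hu' : f⁻¹ = (u : F) * (ϖ : F) ^ n := by simpa using congrArg Subtype.val hu
  have hϖ0 : (ϖ : F) ≠ 0 := by exact_mod_cast hϖ.ne_zero
  have hu1 : ((u : O) : F) * ((u⁻¹ : Oˣ) : O) = 1 := by norm_cast; simp
  have hf' : (ϖ : F) ^ n * f = ((u⁻¹ : Oˣ) : O) := by
    rw [← inv_inv f, hu']
    field_simp
    exact hu1.symm
  exact ⟨n, hf' ▸ Subtype.prop _⟩

theorem Submodule.exists_pow_smul_mem_of_span_eq_top [IsDiscreteValuationRing O] {ϖ : O}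
    (hϖ : Irreducible ϖ) {M : Submodule O V} (hM : span F (M : Set V) = ⊤) (v : V) :
    ∃ n : ℕ, (ϖ : F) ^ n • v ∈ M := by
  have hpow (k : ℕ) {w : V} (hw : w ∈ M) : (ϖ : F) ^ k • w ∈ M :=
    M.smul_mem_of_mem_valuationSubring (O.pow_mem ϖ.2 k) hw
  have hv : v ∈ span F (M : Set V) := hM ▸ mem_top
  induction hv using span_induction with
  | mem x hx => exact ⟨0, by simpa using hx⟩
  | zero => exact ⟨0, by simp⟩
  | add x y _ _ hx hy =>
    obtain ⟨m, hm⟩ := hx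
    obtain ⟨n, hn⟩ := hy
    have hxy : (ϖ : F) ^ (m + n) • (x + y) =
        (ϖ : F) ^ n • (ϖ : F) ^ m • x + (ϖ : F) ^ m • (ϖ : F) ^ n • y := by
      rw [smul_add, smul_smul, smul_smul, ← pow_add, ← pow_add, add_comm n]
    exact ⟨m + n, hxy ▸ M.add_mem (hpow n hm) (hpow m hn)⟩
  | smul a x _ hx =>
    obtain ⟨m, hm⟩ := hx
    obtain ⟨n, hn⟩ := O.exists_pow_mul_mem hϖ a
    have hax : (ϖ : F) ^ (n + m) • a • x = ((ϖ : F) ^ n * a) • (ϖ : F) ^ m • x := by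
      rw [smul_smul, smul_smul]; ring_nf
    exact ⟨n + m, hax ▸ M.smul_mem_of_mem_valuationSubring hn hm⟩

theorem Submodule.exists_forall_pow_smul_mem [IsDiscreteValuationRing O] {ϖ : O}
    (hϖ : Irreducible ϖ) {M N : Submodule O V} (hM : span F (M : Set V) = ⊤) (hN : N.FG) :
    ∃ n : ℕ, ∀ x ∈ N, (ϖ : F) ^ n • x ∈ M := by
  obtain ⟨s, rfl⟩ := hN
  choose n hn using exists_pow_smul_mem_of_span_eq_top hϖ hM
  refine ⟨s.sup n, fun x hx => ?_⟩
  induction hx using span_induction with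
  | mem x hx =>
    rw [← Nat.sub_add_cancel (s.le_sup hx), pow_add, mul_smul]
    exact M.smul_mem_of_mem_valuationSubring (O.pow_mem ϖ.2 _) (hn x)
  | zero => simp
  | add x y _ _ hx hy => rw [smul_add]; exact M.add_mem hx hy
  | smul c x _ hx => rw [smul_comm]; exact M.smul_mem c hx

theorem Submodule.IsLattice.exists_extend [IsPrincipalIdealRing O] (M : Submodule O V)
    [M.IsLattice F] (μ : M →ₗ[O] O) : ∃ φ : V →ₗ[F] F, ∀ z : M, φ z = μ z := by
  let b := Module.Free.chooseBasis O M
  let φ := (b.extendOfIsLattice F).constr F fun k => (μ (b k) : F)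
  have hφ : φ.restrictScalars O ∘ₗ M.subtype = Algebra.linearMap O F ∘ₗ μ :=
    b.ext fun k => by
      simp only [LinearMap.comp_apply, LinearMap.restrictScalars_apply, Submodule.subtype_apply,
        Algebra.linearMap_apply, φ]
      rw [← b.extendOfIsLattice_apply F k, Module.Basis.constr_basis]
      rfl
  exact ⟨φ, LinearMap.congr_fun hφ⟩

theorem Submodule.IsLattice.exists_linearMap_eq_one_of_notMem [IsDiscreteValuationRing O]
    {ϖ : O} (hϖ : Irreducible ϖ) {M N : Submodule O V} [M.IsLattice F] (hNM : N ≤ M)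
    (hMN : ∀ z ∈ M, (ϖ : F) • z ∈ N) {x : V} (hxM : x ∈ M) (hxN : x ∉ N) :
    ∃ φ : V →ₗ[F] F, φ x = 1 ∧ (∀ z ∈ M, φ z ∈ O) ∧ ∀ z ∈ N, ∃ c : O, φ z = ϖ * c := by
  have hmax : IsLocalRing.maximalIdeal O • (⊤ : Submodule O M) ≤ N.comap M.subtype := by
    refine smul_le.2 fun r hr z _ => ?_
    obtain ⟨c, rfl⟩ := Ideal.mem_span_singleton'.1 (hϖ.maximalIdeal_eq ▸ hr)
    rw [mul_smul]
    exact N.smul_mem c (hMN z z.2)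
  obtain ⟨μ, hμx, hμN⟩ :=
    Module.Projective.exists_linearMap_eq_one_of_notMem hmax (x := ⟨x, hxM⟩) hxN
  obtain ⟨φ, hφ⟩ := exists_extend M μ
  refine ⟨φ, by simp [hφ ⟨x, hxM⟩, hμx], fun z hz => hφ ⟨z, hz⟩ ▸ (μ _).2, fun z hz => ?_⟩
  obtain ⟨c, hc⟩ := Ideal.mem_span_singleton'.1 (hϖ.maximalIdeal_eq ▸ hμN ⟨z, hNM hz⟩ hz)
  refine ⟨c, ?_⟩
  rw [hφ ⟨z, hNM hz⟩, ← hc, mul_comm]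
  rfl

namespace IsLatticeChain

variable {ϖ : O} {L : ℤ → Submodule O V} {e : ℕ}

theorem isLattice (hL : IsLatticeChain O ϖ L e) (i : ℤ) : (L i).IsLattice F :=
  ⟨hL.fg i, hL.spans i⟩

theorem strictAnti (hL : IsLatticeChain O ϖ L e) : StrictAnti L :=
  strictAnti_int_of_succ_lt hL.strict

theorem smul_mem_add_iff (hL : IsLatticeChain O ϖ L e) (hϖ : ϖ ≠ 0) {i : ℤ} {x : V} :
    (ϖ : F) • x ∈ L (i + e) ↔ x ∈ L i := by
  refine ⟨fun h => ?_, fun h => (hL.smul_eq i _).2 ⟨x, h, rfl⟩⟩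
  obtain ⟨y, hy, hxy⟩ := (hL.smul_eq i _).1 h
  rwa [smul_right_injective V (by exact_mod_cast hϖ : (ϖ : F) ≠ 0) hxy]

theorem pow_smul_mem_add_iff (hL : IsLatticeChain O ϖ L e) (hϖ : ϖ ≠ 0) (n : ℕ) {i : ℤ}
    {x : V} : (ϖ : F) ^ n • x ∈ L (i + n * e) ↔ x ∈ L i := by
  induction n with
  | zero => simp
  | succ n ih =>
    rw [pow_succ', mul_smul, Nat.cast_succ, add_one_mul, ← add_assoc, hL.smul_mem_add_iff hϖ, ih]

theorem periodic_mapsTo (hL : IsLatticeChain O ϖ L e) (hϖ : ϖ ≠ 0) (a : Module.End F V) :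
    Function.Periodic (fun j => ∀ x ∈ L j, a x ∈ L j) (e : ℤ) := by
  intro j
  refine propext ⟨fun h x hx => ?_, fun h x hx => ?_⟩
  · rw [← hL.smul_mem_add_iff hϖ, ← map_smul]
    exact h _ ((hL.smul_mem_add_iff hϖ).2 hx)
  · obtain ⟨y, hy, rfl⟩ := (hL.smul_eq j x).1 hx
    rw [map_smul, hL.smul_mem_add_iff hϖ]
    exact h y hy

theorem mem_hereditaryOrder_of_forall_Ico (hL : IsLatticeChain O ϖ L e) (hϖ : ϖ ≠ 0)
    {a : Module.End F V} (i : ℤ) (ha : ∀ j ∈ Set.Ico i (i + e), ∀ x ∈ L j, a x ∈ L j) :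
    a ∈ hereditaryOrder O L := fun m => by
  obtain ⟨j, hj, hmj⟩ := (hL.periodic_mapsTo hϖ a).exists_mem_Ico
    (by exact_mod_cast hL.period_pos) m i
  exact hmj ▸ ha j hj

theorem smulRight_mem_hereditaryOrder (hL : IsLatticeChain O ϖ L e) (hϖ : ϖ ≠ 0)
    {φ : V →ₗ[F] F} {i : ℤ} (hφ : ∀ z ∈ L i, φ z ∈ O)
    (hφ' : ∀ z ∈ L (i + 1), ∃ c : O, φ z = ϖ * c) {y : V} (hy : y ∈ L i) :
    φ.smulRight y ∈ hereditaryOrder O L := by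
  refine hL.mem_hereditaryOrder_of_forall_Ico hϖ i fun j ⟨hij, hji⟩ z hz => ?_
  rw [LinearMap.smulRight_apply]
  rcases hij.eq_or_lt with rfl | hij
  · exact (L i).smul_mem_of_mem_valuationSubring (hφ z hz) hy
  · obtain ⟨c, hc⟩ := hφ' z (hL.antitone hij hz)
    rw [hc, mul_smul]
    exact hL.antitone hji.le ((hL.smul_eq i _).2 ⟨_, (L i).smul_mem c hy, rfl⟩)

theorem exists_eq_of_stable [IsDiscreteValuationRing O] (hL : IsLatticeChain O ϖ L e)
    (hϖ : Irreducible ϖ) {M : Submodule O V} [hM : M.IsLattice F]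
    (hstab : ∀ a ∈ hereditaryOrder O L, ∀ x ∈ M, a x ∈ M) : ∃ i, M = L i := by
  obtain ⟨m, hm⟩ := Submodule.exists_forall_pow_smul_mem hϖ (hL.spans 0) hM.fg
  obtain ⟨n, hn⟩ := Submodule.exists_forall_pow_smul_mem hϖ hM.span_eq_top (hL.fg 0)
  have hMle : M ≤ L (-(m * e)) := fun x hx => by
    rw [← hL.pow_smul_mem_add_iff hϖ.ne_zero m, neg_add_cancel]
    exact hm x hx
  have hleM : L (n * e) ≤ M := fun y hy => by
    have hϖn : (ϖ : F) ^ n ≠ 0 := pow_ne_zero n (by exact_mod_cast hϖ.ne_zero)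
    have hy' : ((ϖ : F) ^ n)⁻¹ • y ∈ L 0 := by
      rwa [← hL.pow_smul_mem_add_iff hϖ.ne_zero n, smul_inv_smul₀ hϖn, zero_add]
    simpa [smul_inv_smul₀ hϖn] using hn _ hy'
  have hbdd : ∀ j, M ≤ L j → j ≤ n * e := fun j hj => by
    by_contra! hj'
    exact (hL.strict _).not_ge (hleM.trans (hj.trans (hL.antitone hj')))
  obtain ⟨i, hMi, hmax⟩ := Int.exists_greatest_of_bdd ⟨_, hbdd⟩ ⟨_, hMle⟩
  obtain ⟨x, hxM, hx⟩ := SetLike.not_le_iff_exists.1 fun h => (hmax _ h).not_gt (lt_add_one i)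
  have := hL.isLattice i
  obtain ⟨φ, hφx, hφ, hφ'⟩ := Submodule.IsLattice.exists_linearMap_eq_one_of_notMem hϖ
    (hL.strict i).le (fun z => hL.smul_mem_succ i) (hMi hxM) hx
  refine ⟨i, hMi.antisymm fun y hy => ?_⟩
  simpa [hφx] using hstab _ (hL.smulRight_mem_hereditaryOrder hϖ.ne_zero hφ hφ' hy) x hxM

end IsLatticeChain

end Lattice

theorem Int.eq_add_of_strictMono_of_surjective {σ : ℤ → ℤ} (hmono : StrictMono σ)
    (hsurj : Function.Surjective σ) (i : ℤ) : σ i = i + σ 0 := by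
  have hsucc (i : ℤ) : σ (i + 1) = σ i + 1 := by
    obtain ⟨j, hj⟩ := hsurj (σ i + 1)
    have hij : i < j := hmono.lt_iff_lt.1 (hj ▸ lt_add_one _)
    have hle := hmono.monotone (Int.add_one_le_iff.2 hij)
    have hlt := hmono (lt_add_one i)
    omega
  induction i using Int.induction_on with
  | zero => simp
  | succ i ih => rw [hsucc, ih]; ring
  | pred i ih =>
    have hstep := hsucc (-i - 1)
    rw [sub_add_cancel] at hstep
    omega

theorem hereditaryOrder_comp_add_right (O : ValuationSubring F) (L : ℤ → Submodule O V)
    (k : ℤ) : hereditaryOrder O (fun i => L (i + k)) = hereditaryOrder O L := by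
  ext a
  refine ⟨fun h i => ?_, fun h i => h (i + k)⟩
  simpa using h (i - k)

variable [FiniteDimensional F V] [Nontrivial V]
variable (OF : ValuationSubring F) [IsDiscreteValuationRing OF]
  [Finite (IsLocalRing.ResidueField OF)] (ϖF : OF)

/-- `𝔄(L) = 𝔄(L')` iff `L'` is a translate of `L`:
`L' i = L (i + k)` for some fixed `k ∈ ℤ` and all `i`.  In particular a hereditary
order determines the lattice chain defining it up to translation of the indexing. -/
theorem hereditaryOrder_eq_iff_translate
    (hϖF : Irreducible ϖF)
    (L L' : ℤ → Submodule OF V) (e e' : ℕ)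
    (hL : IsLatticeChain OF ϖF L e) (hL' : IsLatticeChain OF ϖF L' e') :
    hereditaryOrder OF L = hereditaryOrder OF L'
      ↔ ∃ k : ℤ, ∀ i, L' i = L (i + k) := by
  constructor
  · intro h
    have hL'L : ∀ i, ∃ m, L' i = L m := fun i =>
      have := hL'.isLattice i
      hL.exists_eq_of_stable hϖF fun a ha => (h ▸ ha : a ∈ hereditaryOrder OF L') i
    have hLL' : ∀ m, ∃ i, L m = L' i := fun m =>
      have := hL.isLattice m
      hL'.exists_eq_of_stable hϖF fun a ha => (h ▸ ha : a ∈ hereditaryOrder OF L) m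
    choose σ hσ using hL'L
    have hmono : StrictMono σ := fun i j hij =>
      hL.strictAnti.lt_iff_gt.1 (hσ i ▸ hσ j ▸ hL'.strictAnti hij)
    have hsurj : Function.Surjective σ := fun m =>
      let ⟨i, hi⟩ := hLL' m
      ⟨i, hL.strictAnti.injective (hi ▸ hσ i).symm⟩
    exact ⟨σ 0, fun i => by rw [hσ, Int.eq_add_of_strictMono_of_surjective hmono hsurj]⟩
  · rintro ⟨k, hk⟩
    rw [funext hk, hereditaryOrder_comp_add_right]

end
end

section
/- Let L and L′ be 𝒪_F-lattice chains in V. Then 𝔄(L) ⊆ 𝔄(L′) if and only if every lattice occurring in the chain L′ occurs in the chain L, i.e. {L′(i) : i ∈ ℤ} ⊆ {L(i) : i ∈ ℤ}. Moreover, if 𝔄(L) ⊆ 𝔄(L′) then 𝔓(L′) ⊆ 𝔓(L). -/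
/-!
Context: `F` is a nonarchimedean local field, modelled as a field together with a
valuation subring `OF` which is a discrete valuation ring with finite residue field,
with a fixed uniformizer `ϖF` (an irreducible element of `OF`).  `V` is a nonzero
finite-dimensional `F`-vector space, `A = End_F V` and `G = GL_F(V) = (End_F V)ˣ`.
-/

noncomputable section

variable {F : Type*} [Field F] {V : Type*} [AddCommGroup V] [Module F V]

/-!
An `𝔄(L)`-stable lattice `M` sits between consecutive members of the chain: `M ⊆ L j` but
`M ⊄ L (j + 1)`. Pick `x ∈ M \ L (j + 1)`. Since `ϖ L j ⊆ L (j + 1)`, the quotient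
`L j / L (j + 1)` is a `k_F`-vector space in which `x` is nonzero; a functional detecting `x`
lifts to the free `𝒪_F`-module `L j` and extends to `f : V → F` with `f x = 1` and
`f (L (j + 1)) ⊆ ϖ 𝒪_F`. By periodicity of the chain, each rank-one map `z ↦ f z • y` with
`y ∈ L j` lies in `𝔄(L)`, so `L j = 𝔄(L) x ⊆ M`.

For the radicals, squeeze `L j` in the same way between `L' i ⊇ L j` and `L' (i + 1) ⊉ L j`.
As `L' (i + 1)` is a member of `L` not containing `L j`, it lies in `L (j + 1)`, so an element of
`𝔓(L')` maps `L j ⊆ L' i` into `L' (i + 1) ⊆ L (j + 1)`.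
-/

open IsLocalRing in
theorem Module.exists_linearMap_eq_one_of_maximalIdeal_smul_le {R M : Type*} [CommRing R]
    [IsLocalRing R] [AddCommGroup M] [Module R M] [Module.Projective R M] {N : Submodule R M}
    (hN : maximalIdeal R • (⊤ : Submodule R M) ≤ N) {x : M} (hx : x ∉ N) :
    ∃ g : M →ₗ[R] R, g x = 1 ∧ ∀ z ∈ N, g z ∈ maximalIdeal R := by
  have htors : IsTorsionBySet R (M ⧸ N) (maximalIdeal R) :=
    (isTorsionBySet_quotient_iff N _).2 fun z r hr => hN (Submodule.smul_mem_smul hr trivial)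
  let := Ideal.Quotient.field (maximalIdeal R)
  let := htors.module
  obtain ⟨φ, hφ⟩ := Module.Projective.exists_dual_eq_one (R ⧸ maximalIdeal R)
    (x := N.mkQ x) (by simpa using hx)
  obtain ⟨g, hg⟩ := Module.projective_lifting_property (maximalIdeal R).mkQ
    ((φ.restrictScalars R) ∘ₗ N.mkQ) (Submodule.mkQ_surjective _)
  have hg_apply (z : M) : Ideal.Quotient.mk _ (g z) = φ (N.mkQ z) := LinearMap.congr_fun hg z
  have hgx : IsUnit (g x) := by
    rw [← notMem_maximalIdeal, ← Ideal.Quotient.eq_zero_iff_mem, hg_apply, hφ]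
    exact one_ne_zero
  refine ⟨hgx.unit⁻¹ • g, by simp [Units.smul_def], fun z hz => ?_⟩
  rw [LinearMap.smul_apply]
  refine Ideal.mul_mem_left _ _ ?_
  rw [← Ideal.Quotient.eq_zero_iff_mem, hg_apply, Submodule.mkQ_apply,
    (Submodule.Quotient.mk_eq_zero N).2 hz, map_zero]

theorem Submodule.exists_linearMap_extend_of_span_eq_top {R K W : Type*} [CommRing R]
    [IsDomain R] [Field K] [Algebra R K] [IsFractionRing R K] [AddCommGroup W] [Module K W]
    [Module R W] [IsScalarTower R K W] {M : Submodule R W} [Module.Free R M]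
    (hM : span K (M : Set W) = ⊤) (g : M →ₗ[R] R) :
    ∃ f : W →ₗ[K] K, ∀ z : M, f z = algebraMap R K (g z) := by
  let b := Module.Free.chooseBasis R M
  have hli : LinearIndependent K (M.subtype ∘ b) :=
    (LinearIndependent.iff_fractionRing R K).1 (b.linearIndependent.map' M.subtype M.ker_subtype)
  have hR : span R (Set.range (M.subtype ∘ b)) = M := by
    rw [Set.range_comp, ← map_span, b.span_eq, map_subtype_top]
  have hsp : ⊤ ≤ span K (Set.range (M.subtype ∘ b)) := by
    rw [← hM, ← span_span_of_tower R K (Set.range _), hR]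
  let bK := Module.Basis.mk hli hsp
  refine ⟨bK.constr K fun i => algebraMap R K (g (b i)), fun z => ?_⟩
  have key : ((bK.constr K fun i => algebraMap R K (g (b i))).restrictScalars R) ∘ₗ M.subtype =
      Algebra.linearMap R K ∘ₗ g :=
    b.ext fun i => by
      simp [show ((b i : M) : W) = bK i from (Module.Basis.mk_apply hli hsp i).symm]
  exact LinearMap.congr_fun key z

theorem Submodule.ne_bot_of_span_eq_top {R K W : Type*} [Semiring R] [Semiring K]
    [AddCommMonoid W] [Module R W] [Module K W] [Nontrivial W] {M : Submodule R W}
    (hM : span K (M : Set W) = ⊤) : M ≠ ⊥ := by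
  rintro rfl
  simp at hM

namespace ValuationSubring

variable {O : ValuationSubring F}

theorem smul_def (c : O) (v : V) : c • v = (c : F) • v := rfl

instance instIsScalarTowerOfModule : IsScalarTower O F V :=
  ⟨fun c a v => mul_smul (c : F) a v⟩

end ValuationSubring

namespace IsLatticeChain

variable {O : ValuationSubring F} {ϖ : O} {L : ℤ → Submodule O V} {e : ℕ}

theorem mem_add_period_iff (hL : IsLatticeChain O ϖ L e) (hϖ : ϖ ≠ 0) {i : ℤ} {x : V} :
    x ∈ L (i + e) ↔ (ϖ : F)⁻¹ • x ∈ L i := by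
  have hϖ' : (ϖ : F) ≠ 0 := by exact_mod_cast hϖ
  rw [hL.smul_eq]
  constructor
  · rintro ⟨y, hy, rfl⟩
    rwa [inv_smul_smul₀ hϖ']
  · exact fun h => ⟨_, h, (smul_inv_smul₀ hϖ' x).symm⟩

theorem mem_add_mul_period_iff (hL : IsLatticeChain O ϖ L e) (hϖ : ϖ ≠ 0) (k : ℤ) {i : ℤ}
    {x : V} : x ∈ L (i + k * e) ↔ (ϖ : F) ^ (-k) • x ∈ L i := by
  have hϖ' : (ϖ : F) ≠ 0 := by exact_mod_cast hϖ
  induction k using Int.induction_on generalizing x with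
  | zero => simp
  | succ k ih =>
    rw [show i + (k + 1) * e = i + k * e + e by ring, hL.mem_add_period_iff hϖ]
    refine ih.trans ?_
    rw [smul_smul, ← zpow_neg_one, ← zpow_add₀ hϖ']
    ring_nf
  | pred k ih =>
    have h := hL.mem_add_period_iff hϖ (i := i + (-k - 1) * e) (x := (ϖ : F) • x)
    rw [inv_smul_smul₀ hϖ', show i + (-k - 1) * e + e = i + -k * e by ring] at h
    refine h.symm.trans (ih.trans ?_)
    rw [smul_smul, ← zpow_add_one₀ hϖ']
    ring_nf

theorem mem_hereditaryOrder_of_forall_Ioc (hL : IsLatticeChain O ϖ L e) (hϖ : ϖ ≠ 0)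
    {a : Module.End F V} (j : ℤ) (h : ∀ i ∈ Set.Ioc j (j + e), ∀ x ∈ L i, a x ∈ L i) :
    a ∈ hereditaryOrder O L := by
  intro i x hx
  have he : (0 : ℤ) < e := by exact_mod_cast hL.period_pos
  have hi : i = j + 1 + (i - j - 1) % e + (i - j - 1) / e * e := by
    linear_combination -Int.mul_ediv_add_emod (i - j - 1) e
  have hr : j + 1 + (i - j - 1) % e ∈ Set.Ioc j (j + e) := by
    have := Int.emod_nonneg (i - j - 1) he.ne'
    have := Int.emod_lt_of_pos (i - j - 1) he
    constructor <;> omega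
  rw [hi, hL.mem_add_mul_period_iff hϖ] at hx ⊢
  rw [← map_smul]
  exact h _ hr _ hx

variable [IsDiscreteValuationRing O]

theorem exists_mem (hL : IsLatticeChain O ϖ L e) (hϖ : Irreducible ϖ) (v : V) :
    ∃ i, v ∈ L i := by
  have hv : v ∈ Submodule.span F (L 0 : Set V) := hL.spans 0 ▸ Submodule.mem_top
  obtain ⟨y, hy, z, rfl⟩ := (IsLocalization.mem_span_iff (nonZeroDivisors O)).1 hv
  rw [Submodule.span_eq] at hy
  obtain ⟨s, u, hz⟩ := IsDiscreteValuationRing.eq_unit_mul_pow_irreducible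
    (nonZeroDivisors.coe_ne_zero z) hϖ
  refine ⟨_, (hL.mem_add_mul_period_iff hϖ.ne_zero (-s) (i := 0)).2 ?_⟩
  have hϖs : (ϖ : F) ^ s = ((u⁻¹ * z : O) : F) := by
    rw [hz, ← mul_assoc, Units.inv_mul, one_mul, SubmonoidClass.coe_pow]
  have hzF : (z : F) ≠ 0 := by exact_mod_cast nonZeroDivisors.coe_ne_zero z
  rw [neg_neg, zpow_natCast, hϖs, IsFractionRing.mk'_eq_div, smul_smul, map_one, one_div,
    ValuationSubring.algebraMap_apply, MulMemClass.coe_mul, mul_inv_cancel_right₀ hzF,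
    ← ValuationSubring.smul_def]
  exact (L 0).smul_mem _ hy

theorem exists_notMem (hL : IsLatticeChain O ϖ L e) (hϖ : Irreducible ϖ) {v : V}
    (hv : v ≠ 0) : ∃ i, v ∉ L i := by
  by_contra! h
  have : Module.Finite O (L 0) := Module.Finite.iff_fg.2 (hL.fg 0)
  have hϖ' : (ϖ : F) ≠ 0 := by exact_mod_cast hϖ.ne_zero
  have hmem : (⟨v, h 0⟩ : L 0) ∈ ⨅ k : ℕ, Ideal.span {ϖ} ^ k • (⊤ : Submodule O (L 0)) := by
    refine Submodule.mem_iInf _ |>.2 fun k => ?_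
    have hk := (hL.mem_add_mul_period_iff hϖ.ne_zero k (i := 0)).1 (h _)
    rw [Ideal.span_singleton_pow, Submodule.ideal_span_singleton_smul]
    refine (Submodule.mem_smul_pointwise_iff_exists _ _ _).2 ⟨⟨_, hk⟩, trivial, ?_⟩
    ext
    simp [ValuationSubring.smul_def, smul_smul, hϖ']
  rw [Ideal.iInf_pow_smul_eq_bot_of_isLocalRing _
    (Ideal.span_singleton_eq_top.not.2 hϖ.not_isUnit)] at hmem
  exact hv (by simpa using hmem)

theorem exists_le (hL : IsLatticeChain O ϖ L e) (hϖ : Irreducible ϖ) {M : Submodule O V}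
    (hM : M.FG) : ∃ i, M ≤ L i := by
  classical
  obtain ⟨T, rfl⟩ := hM
  choose i hi using hL.exists_mem hϖ
  obtain ⟨k, hk⟩ := (T.image i).bddBelow
  exact ⟨k, Submodule.span_le.2 fun v hv =>
    hL.antitone (hk (Finset.mem_coe.2 (Finset.mem_image_of_mem i hv))) (hi v)⟩

theorem exists_le_and_not_le_add_one (hL : IsLatticeChain O ϖ L e) (hϖ : Irreducible ϖ)
    {M : Submodule O V} (hM : M.FG) (hM₀ : M ≠ ⊥) : ∃ i, M ≤ L i ∧ ¬M ≤ L (i + 1) := by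
  obtain ⟨v, hvM, hv⟩ := Submodule.exists_mem_ne_zero_of_ne_bot hM₀
  obtain ⟨i₀, hi₀⟩ := hL.exists_notMem hϖ hv
  have hbdd : ∃ b, ∀ i, M ≤ L i → i ≤ b :=
    ⟨i₀, fun i hi => not_lt.1 fun hlt => hi₀ (hL.antitone hlt.le (hi hvM))⟩
  obtain ⟨i, hi, hmax⟩ := Int.exists_greatest_of_bdd hbdd (hL.exists_le hϖ hM)
  exact ⟨i, hi, fun h => (hmax _ h).not_gt (lt_add_one i)⟩

theorem exists_linearMap_eq_one (hL : IsLatticeChain O ϖ L e) (hϖ : Irreducible ϖ) {j : ℤ}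
    {x : V} (hx : x ∈ L j) (hx' : x ∉ L (j + 1)) :
    ∃ f : V →ₗ[F] F, f x = 1 ∧ ∀ z ∈ L (j + 1), ∃ d : O, f z = (ϖ * d : O) := by
  have : Module.Finite O (L j) := Module.Finite.iff_fg.2 (hL.fg j)
  have : Module.IsTorsionFree O V := .trans F
  have hN : IsLocalRing.maximalIdeal O • ⊤ ≤ (L (j + 1)).comap (L j).subtype := by
    rw [hϖ.maximalIdeal_eq, Submodule.ideal_span_singleton_smul]
    rintro _ ⟨z, -, rfl⟩
    exact hL.smul_mem_succ j z.2
  obtain ⟨g, hgx, hgN⟩ :=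
    Module.exists_linearMap_eq_one_of_maximalIdeal_smul_le hN (x := ⟨x, hx⟩) hx'
  obtain ⟨f, hf⟩ := Submodule.exists_linearMap_extend_of_span_eq_top (hL.spans j) g
  refine ⟨f, by simpa [hgx] using hf ⟨x, hx⟩, fun z hz => ?_⟩
  have hz' : z ∈ L j := hL.antitone (by omega) hz
  obtain ⟨d, hd⟩ := Ideal.mem_span_singleton'.1 (hϖ.maximalIdeal_eq ▸ hgN ⟨z, hz'⟩ hz)
  exact ⟨d, by rw [hf ⟨z, hz'⟩, ← hd, mul_comm]; rfl⟩

theorem exists_mem_hereditaryOrder_apply_eq (hL : IsLatticeChain O ϖ L e) (hϖ : Irreducible ϖ)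
    {j : ℤ} {x y : V} (hx : x ∈ L j) (hx' : x ∉ L (j + 1)) (hy : y ∈ L j) :
    ∃ a ∈ hereditaryOrder O L, a x = y := by
  obtain ⟨f, hfx, hf⟩ := hL.exists_linearMap_eq_one hϖ hx hx'
  refine ⟨f.smulRight y, hL.mem_hereditaryOrder_of_forall_Ioc hϖ.ne_zero j fun i hi z hz => ?_,
    by simp [hfx]⟩
  obtain ⟨d, hd⟩ := hf z (hL.antitone (Int.add_one_le_iff.2 hi.1) hz)
  have hϖdy : (ϖ : F) • (d • y) ∈ L (j + e) := (hL.smul_eq j _).2 ⟨_, (L j).smul_mem d hy, rfl⟩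
  rw [LinearMap.smulRight_apply, hd, MulMemClass.coe_mul, mul_smul, ← ValuationSubring.smul_def]
  exact hL.antitone hi.2 hϖdy

theorem exists_eq_of_forall_mem_hereditaryOrder [Nontrivial V] (hL : IsLatticeChain O ϖ L e)
    (hϖ : Irreducible ϖ) {M : Submodule O V} (hM : M.FG)
    (hMspan : Submodule.span F (M : Set V) = ⊤)
    (hstab : ∀ a ∈ hereditaryOrder O L, ∀ x ∈ M, a x ∈ M) : ∃ j, M = L j := by
  obtain ⟨j, hMj, hMj'⟩ :=
    hL.exists_le_and_not_le_add_one hϖ hM (Submodule.ne_bot_of_span_eq_top hMspan)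
  obtain ⟨x, hxM, hx'⟩ := Set.not_subset.1 hMj'
  refine ⟨j, hMj.antisymm fun y hy => ?_⟩
  obtain ⟨a, ha, rfl⟩ := hL.exists_mem_hereditaryOrder_apply_eq hϖ (hMj hxM) hx' hy
  exact hstab a ha x hxM

end IsLatticeChain

section

variable {O : ValuationSubring F} {L L' : ℤ → Submodule O V}

theorem hereditaryOrder_le_of_forall_exists_eq (h : ∀ i, ∃ j, L' i = L j) :
    hereditaryOrder O L ≤ hereditaryOrder O L' := fun a ha i => by
  obtain ⟨j, hj⟩ := h i
  rw [hj]
  exact ha j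

theorem radicalSet_subset_of_forall_exists_eq [Nontrivial V] [IsDiscreteValuationRing O]
    {ϖ : O} {e e' : ℕ} (hL : IsLatticeChain O ϖ L e) (hL' : IsLatticeChain O ϖ L' e')
    (hϖ : Irreducible ϖ) (h : ∀ i, ∃ j, L' i = L j) : radicalSet O L' ⊆ radicalSet O L := by
  intro a ha j x hx
  obtain ⟨i, hi, hi'⟩ := hL'.exists_le_and_not_le_add_one hϖ (hL.fg j)
    (Submodule.ne_bot_of_span_eq_top (hL.spans j))
  obtain ⟨k, hk⟩ := h (i + 1)
  have hjk : j + 1 ≤ k := by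
    by_contra! hkj
    exact hi' (hk ▸ hL.antitone (Int.lt_add_one_iff.1 hkj))
  exact hL.antitone hjk (hk ▸ ha i x (hi hx))

end

variable [FiniteDimensional F V] [Nontrivial V]
variable (OF : ValuationSubring F) [IsDiscreteValuationRing OF]
  [Finite (IsLocalRing.ResidueField OF)] (ϖF : OF)

/-- `𝔄(L) ⊆ 𝔄(L')` iff every lattice occurring in the chain `L'`
occurs in the chain `L`; and in that case `𝔓(L') ⊆ 𝔓(L)`. -/
theorem hereditaryOrder_le_iff_subchain
    (hϖF : Irreducible ϖF)
    (L L' : ℤ → Submodule OF V) (e e' : ℕ)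
    (hL : IsLatticeChain OF ϖF L e) (hL' : IsLatticeChain OF ϖF L' e') :
    (hereditaryOrder OF L ≤ hereditaryOrder OF L' ↔ ∀ i : ℤ, ∃ j : ℤ, L' i = L j) ∧
    (hereditaryOrder OF L ≤ hereditaryOrder OF L' →
      radicalSet OF L' ⊆ radicalSet OF L) := by
  have subchain (h : hereditaryOrder OF L ≤ hereditaryOrder OF L') (i : ℤ) : ∃ j, L' i = L j :=
    hL.exists_eq_of_forall_mem_hereditaryOrder hϖF (hL'.fg i) (hL'.spans i) fun _ ha => h ha i
  exact ⟨⟨subchain, hereditaryOrder_le_of_forall_exists_eq⟩,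
    fun h => radicalSet_subset_of_forall_exists_eq hL hL' hϖF (subchain h)⟩

end
end
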